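/- Let (X,κ) be a digital image and let p, r be points of the same κ-component of X. Let q be a κ-path in X from p to r, with reverse path q^{-1}(t) = q(m−t). Then the induced function q_# : Π_1^κ(X,p) → Π_1^κ(X,r) defined on a p-based EC loop f by q_#([f]) = [(q^{-1})_∞ * f * q_∞] (using the product of EC loops, and the fundamental group realized as EC homotopy classes of EC loops) is a group isomorphism. -/
import Mathlib


/-- 2-adjacency (c₁-adjacency) on the natural numbers / digital intervals. -/
def natAdj (a b : ℕ) : Prop := b = a + 1 ∨ a = b + 1

/-- Digital `(κ,μ)`-continuity of a function between digital images. -/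
def DigCont {X Y : Type*} (κ : X → X → Prop) (μ : Y → Y → Prop) (f : X → Y) : Prop :=
  ∀ a b, κ a b → f a = f b ∨ μ (f a) (f b)

/-- `(2,κ)`-continuity for functions on `ℕ* = {0,1,2,…}` with 2-adjacency. -/
def ECCont {X : Type*} (κ : X → X → Prop) (f : ℕ → X) : Prop :=
  ∀ a b, natAdj a b → f a = f b ∨ κ (f a) (f b)

/-- An eventually constant (EC) path in `(X,κ)`. -/
def IsECPath {X : Type*} (κ : X → X → Prop) (f : ℕ → X) : Prop :=
  ECCont κ f ∧ ∃ N, ∀ n, N ≤ n → f n = f N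

/-- `N_f`, the least index after which `f` is constant. -/
noncomputable def ecN {X : Type*} (f : ℕ → X) : ℕ :=
  sInf {m | ∀ n, m ≤ n → f n = f m}

/-- An EC homotopy from `f` to `g` (each stage is an EC path). -/
def IsECHomotopy {X : Type*} (κ : X → X → Prop) (f g : ℕ → X) (k : ℕ)
    (H : ℕ → ℕ → X) : Prop :=
  (∀ n, H n 0 = f n) ∧ (∀ n, H n k = g n) ∧
  (∀ n s t, s ≤ k → t ≤ k → natAdj s t → H n s = H n t ∨ κ (H n s) (H n t)) ∧
  (∀ t, t ≤ k → IsECPath κ (fun n => H n t))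

/-- The EC homotopy `H` from `f` to `g` holds the endpoints fixed. -/
def ECHoldsEnds {X : Type*} (f g : ℕ → X) (k : ℕ) (H : ℕ → ℕ → X) : Prop :=
  f 0 = g 0 ∧ (∀ t, t ≤ k → H 0 t = f 0) ∧
  ∃ c, ∀ n, c ≤ n → f n = g n ∧ ∀ t, t ≤ k → H n t = f n

/-- `f` and `g` are EC homotopic. -/
def ECHomotopic {X : Type*} (κ : X → X → Prop) (f g : ℕ → X) : Prop :=
  ∃ k H, IsECHomotopy κ f g k H

/-- `f` and `g` are EC homotopic holding the endpoints fixed. -/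
def ECHomotopicFix {X : Type*} (κ : X → X → Prop) (f g : ℕ → X) : Prop :=
  ∃ k H, IsECHomotopy κ f g k H ∧ ECHoldsEnds f g k H

/-- A finite digital path `f : [0,m]_ℤ → X`, represented by its length `len`
and its values, frozen (constant) beyond `len`. -/
structure DPath (X : Type*) where
  len : ℕ
  toFun : ℕ → X
  frozen : ∀ n, len ≤ n → toFun n = toFun len

/-- `p_∞ : ℕ* → X`, the eventually constant extension of a finite path. -/
def DPath.inf {X : Type*} (p : DPath X) : ℕ → X := fun n => p.toFun (min n p.len)

/-- `(2,κ)`-continuity of a finite path on its domain `[0,len]_ℤ`. -/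
def DPath.IsCont {X : Type*} (κ : X → X → Prop) (p : DPath X) : Prop :=
  ∀ a b, a ≤ p.len → b ≤ p.len → natAdj a b →
    p.toFun a = p.toFun b ∨ κ (p.toFun a) (p.toFun b)

/-- `f_-`, the restriction of an EC path `f` to `[0, N_f]_ℤ`. -/
noncomputable def ecTrunc {X : Type*} (f : ℕ → X) : DPath X where
  len := ecN f
  toFun := fun n => f (min n (ecN f))
  frozen := by intro n hn; simp [min_eq_right hn]

/-- Concatenation (product) `p * q` of finite paths. -/
def DPath.concat {X : Type*} (p q : DPath X) : DPath X where
  len := p.len + q.len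
  toFun := fun t => if t < p.len then p.toFun t else q.toFun (t - p.len)
  frozen := by
    intro n hn
    have h1 : ¬ n < p.len := by omega
    have h2 : ¬ p.len + q.len < p.len := by omega
    simp only [if_neg h1, if_neg h2]
    rw [q.frozen (n - p.len) (by omega), Nat.add_sub_cancel_left]

/-- A constant (trivial) path. -/
def IsConstPath {X : Type*} (p : DPath X) : Prop := ∀ n, p.toFun n = p.toFun 0

/-- The product `p * l₀ * l₁ * ⋯` of a nonempty family of paths. -/
def concatAll {X : Type*} (p : DPath X) (l : List (DPath X)) : DPath X :=
  l.foldl DPath.concat p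

/-- Consecutive paths in the list are composable (endpoints match). -/
def ChainOK {X : Type*} (l : List (DPath X)) : Prop :=
  l.Chain' (fun p q => p.toFun p.len = q.toFun 0)

/-- `TrivExt κ f f'` : the path `f'` is a trivial extension of the path `f`:
`f = f₁ * ⋯ * f_k`, `f' = F₁ * ⋯ * F_p`, with indices `i₁ < ⋯ < i_k`,
`F_{i_j} = f_j`, and every other `F_i` a constant loop. -/
def TrivExt {X : Type*} (κ : X → X → Prop) (f f' : DPath X) : Prop :=
  ∃ (a : DPath X) (fs : List (DPath X)) (b : DPath X) (Fs : List (DPath X)),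
    (∀ r ∈ a :: fs, DPath.IsCont κ r) ∧ (∀ r ∈ b :: Fs, DPath.IsCont κ r) ∧
    ChainOK (a :: fs) ∧ ChainOK (b :: Fs) ∧
    f = concatAll a fs ∧ f' = concatAll b Fs ∧
    ∃ idx : Fin (a :: fs).length → Fin (b :: Fs).length,
      StrictMono idx ∧
      (∀ j, (b :: Fs).get (idx j) = (a :: fs).get j) ∧
      (∀ i, (∀ j, idx j ≠ i) → IsConstPath ((b :: Fs).get i))

/-- The product `f * g` of EC loops. -/
noncomputable def ecStar {X : Type*} (f g : ℕ → X) : ℕ → X :=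
  fun n => if n ≤ ecN f then f n else g (n - ecN f)

/-- An EC loop based at `x₀`: an EC path with `f(0) = f(∞) = x₀`. -/
def IsECLoop {X : Type*} (κ : X → X → Prop) (x₀ : X) (f : ℕ → X) : Prop :=
  IsECPath κ f ∧ f 0 = x₀ ∧ ∃ N, ∀ n, N ≤ n → f n = x₀

/-- The reverse `q⁻¹(t) = q(m - t)` of a finite path. -/
def DPath.rev {X : Type*} (p : DPath X) : DPath X where
  len := p.len
  toFun := fun n => p.toFun (p.len - n)
  frozen := by
    intro n hn
    show p.toFun (p.len - n) = p.toFun (p.len - p.len)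
    have h : p.len - n = 0 := by omega
    rw [h, Nat.sub_self]

/-- `(q⁻¹)_∞ * f * q_∞`, conjugation of an EC loop by a path `q`. -/
noncomputable def ecConj {X : Type*} (q : DPath X) (f : ℕ → X) : ℕ → X :=
  ecStar (ecStar (DPath.inf (DPath.rev q)) f) (DPath.inf q)

section Basics
variable {X : Type*} {κ : X → X → Prop}

lemma natAdj_symm {a b : ℕ} (h : natAdj a b) : natAdj b a := h.symm

lemma ECCont.close {g : ℕ → X} (hg : ECCont κ g) {a b : ℕ} (h : a = b ∨ natAdj a b) :
    g a = g b ∨ κ (g a) (g b) := by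
  rcases h with h | h
  · exact Or.inl (congrArg g h)
  · exact hg a b h

/-- `q.toFun` applied to close arguments within range. -/
lemma qstep (q : DPath X) (hq : q.IsCont κ) {a b : ℕ} (ha : a ≤ q.len) (hb : b ≤ q.len)
    (h : a = b ∨ natAdj a b) : q.toFun a = q.toFun b ∨ κ (q.toFun a) (q.toFun b) := by
  rcases h with h | h
  · exact Or.inl (congrArg q.toFun h)
  · exact hq a b ha hb h

lemma ecN_spec {f : ℕ → X} (hf : ∃ N, ∀ n, N ≤ n → f n = f N) :
    ∀ n, ecN f ≤ n → f n = f (ecN f) :=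
  Nat.sInf_mem (s := {m | ∀ n, m ≤ n → f n = f m}) hf

lemma ecN_le {f : ℕ → X} {N : ℕ} (hN : ∀ n, N ≤ n → f n = f N) : ecN f ≤ N :=
  Nat.sInf_le hN

lemma ecN_eq_tail {f : ℕ → X} {N : ℕ} (hN : ∀ n, N ≤ n → f n = f N) : f (ecN f) = f N := by
  have h1 := ecN_spec ⟨N, hN⟩ (max N (ecN f)) (le_max_right _ _)
  have h2 := hN (max N (ecN f)) (le_max_left _ _)
  exact h1.symm.trans h2

lemma ecN_const (x : X) : ecN (fun _ => x) = 0 :=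
  Nat.le_zero.mp (ecN_le (f := fun _ => x) (N := 0) fun _ _ => rfl)

lemma const_isECPath (x : X) : IsECPath κ (fun _ => x) :=
  ⟨fun _ _ _ => Or.inl rfl, 0, fun _ _ => rfl⟩

lemma loop_ecN_val {x : X} {f : ℕ → X} (hf : IsECLoop κ x f) : f (ecN f) = x := by
  obtain ⟨_, _, N, hN⟩ := hf
  have : ∀ n, N ≤ n → f n = f N := fun n hn => (hN n hn).trans (hN N le_rfl).symm
  exact (ecN_eq_tail this).trans (hN N le_rfl)

section Star
variable {f g h : ℕ → X}

lemma star_le {n : ℕ} (h : n ≤ ecN f) : ecStar f g n = f n := if_pos h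

lemma star_ge (hfg : g 0 = f (ecN f)) {n : ℕ} (h : ecN f ≤ n) :
    ecStar f g n = g (n - ecN f) := by
  rcases eq_or_lt_of_le h with h' | h'
  · show (if n ≤ ecN f then f n else g (n - ecN f)) = g (n - ecN f)
    rw [if_pos h'.ge, ← h', Nat.sub_self, hfg, h']
  · exact if_neg (by omega)

lemma star_isECPath (hf : IsECPath κ f) (hg : IsECPath κ g) (hfg : g 0 = f (ecN f)) :
    IsECPath κ (ecStar f g) := by
  have hfs := ecN_spec hf.2
  have hgs := ecN_spec hg.2
  constructor
  · intro a b hab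
    by_cases ha : a ≤ ecN f <;> by_cases hb : b ≤ ecN f
    · rw [star_le ha, star_le hb]; exact hf.1 a b hab
    · have hab' : a = ecN f ∧ b = ecN f + 1 := by unfold natAdj at hab; omega
      rw [star_le ha, star_ge hfg (by omega), hab'.1, ← hfg]
      have : b - ecN f = 1 := by omega
      rw [this]
      exact hg.1 0 1 (Or.inl rfl)
    · have hab' : b = ecN f ∧ a = ecN f + 1 := by unfold natAdj at hab; omega
      rw [star_le hb, star_ge hfg (by omega), hab'.1, ← hfg]
      have : a - ecN f = 1 := by omega
      rw [this]
      exact hg.1 1 0 (Or.inr rfl)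
    · rw [star_ge hfg (by omega), star_ge hfg (by omega)]
      exact hg.1 (a - ecN f) (b - ecN f) (by unfold natAdj at hab ⊢; omega)
  · refine ⟨ecN f + ecN g, fun n hn => ?_⟩
    rw [star_ge hfg (by omega), star_ge hfg (by omega)]
    rw [hgs (n - ecN f) (by omega)]
    congr 1
    omega

lemma star_ecN (hf : IsECPath κ f) (hg : IsECPath κ g) (hfg : g 0 = f (ecN f)) :
    ecN (ecStar f g) = ecN f + ecN g := by
  have hfs := ecN_spec hf.2
  have hgs := ecN_spec hg.2
  have hub : ecN (ecStar f g) ≤ ecN f + ecN g := by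
    apply ecN_le
    intro n hn
    rw [star_ge hfg (by omega), star_ge hfg (by omega)]
    rw [hgs (n - ecN f) (by omega)]
    congr 1
    omega
  refine le_antisymm hub ?_
  by_contra hlt
  push_neg at hlt
  set m := ecN (ecStar f g) with hm
  have hmem : ∀ n, m ≤ n → ecStar f g n = ecStar f g m :=
    ecN_spec (star_isECPath hf hg hfg).2
  by_cases hNg : ecN g = 0
  · -- then m < ecN f; show f constant from m, contradiction
    have hmf : m < ecN f := by omega
    have : ∀ k, m ≤ k → f k = f m := by
      intro k hk
      by_cases hkf : k ≤ ecN f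
      · rw [← star_le (f := f) (g := g) hkf, ← star_le (f := f) (g := g) hmf.le]
        exact hmem k hk
      · rw [hfs k (by omega), ← star_le (f := f) (g := g) le_rfl,
          ← star_le (f := f) (g := g) hmf.le]
        exact hmem (ecN f) (by omega)
    have := ecN_le this
    omega
  · -- ecN g > 0 : show g constant from ecN g - 1, contradiction with minimality
    have h1 : ecStar f g (ecN f + ecN g - 1) = g (ecN g - 1) := by
      rw [star_ge hfg (by omega)]; congr 1; omega
    have h2 : ecStar f g (ecN f + ecN g) = g (ecN g) := by
      rw [star_ge hfg (by omega)]; congr 1; omega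
    have hgg : g (ecN g - 1) = g (ecN g) := by
      have e := (hmem _ (show m ≤ ecN f + ecN g - 1 by omega)).trans
        (hmem _ (show m ≤ ecN f + ecN g by omega)).symm
      rw [h1, h2] at e
      exact e
    have : ∀ k, ecN g - 1 ≤ k → g k = g (ecN g - 1) := by
      intro k hk
      rcases Nat.lt_or_ge k (ecN g) with hk' | hk'
      · have : k = ecN g - 1 := by omega
        rw [this]
      · rw [hgs k hk', hgg]
    have := ecN_le this
    omega

lemma star_assoc (hf : IsECPath κ f) (hg : IsECPath κ g) (hh : IsECPath κ h)
    (hfg : g 0 = f (ecN f)) (hgh : h 0 = g (ecN g)) :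
    ecStar (ecStar f g) h = ecStar f (ecStar g h) := by
  have hN := star_ecN hf hg hfg
  have hj1 : h 0 = ecStar f g (ecN (ecStar f g)) := by
    rw [hN, star_ge hfg (by omega), hgh]; congr 1; omega
  have hj2 : ecStar g h 0 = f (ecN f) := by rw [star_le (Nat.zero_le _), hfg]
  funext n
  by_cases h1 : n ≤ ecN f
  · rw [star_le (f := f) (g := ecStar g h) h1, star_le (by omega : n ≤ ecN (ecStar f g)),
      star_le h1]
  · by_cases h2 : n ≤ ecN f + ecN g
    · rw [star_le (by omega : n ≤ ecN (ecStar f g)), star_ge hfg (by omega),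
        star_ge hj2 (by omega), star_le (by omega : n - ecN f ≤ ecN g)]
    · rw [star_ge hj1 (by omega), star_ge hj2 (by omega),
        star_ge hgh (by omega), hN]
      congr 1
      omega

lemma const_star {x : X} (hg0 : g 0 = x) : ecStar (fun _ => x) g = g := by
  funext n
  by_cases h : n ≤ ecN (fun _ : ℕ => x)
  · rw [star_le h]
    rw [ecN_const] at h
    have : n = 0 := by omega
    rw [this, hg0]
  · rw [star_ge (by rw [hg0]) (by omega), ecN_const, Nat.sub_zero]

lemma star_const {x : X} (hf : IsECPath κ f) (hx : f (ecN f) = x) :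
    ecStar f (fun _ => x) = f := by
  funext n
  by_cases h : n ≤ ecN f
  · exact star_le h
  · rw [star_ge (by rw [hx]) (by omega), ecN_spec hf.2 n (by omega), hx]

end Star
end Basics
section Homotopy
variable {X : Type*} {κ : X → X → Prop} {f g h : ℕ → X}

lemma hfix_refl (hf : IsECPath κ f) : ECHomotopicFix κ f f :=
  ⟨0, fun n _ => f n,
    ⟨fun _ => rfl, fun _ => rfl, fun _ _ _ _ _ _ => Or.inl rfl, fun _ _ => hf⟩,
    rfl, fun _ _ => rfl, 0, fun _ _ => ⟨rfl, fun _ _ => rfl⟩⟩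

lemma hfix_symm (H : ECHomotopicFix κ f g) : ECHomotopicFix κ g f := by
  obtain ⟨k, H, ⟨h0, hk, hadj, hec⟩, e0, eH, c, ec⟩ := H
  refine ⟨k, fun n t => H n (k - t),
    ⟨fun n => by simp [hk], fun n => by simp [h0], ?_, fun t ht => hec (k - t) (by omega)⟩,
    e0.symm, fun t ht => (eH (k - t) (by omega)).trans e0, c, fun n hn =>
      ⟨(ec n hn).1.symm, fun t ht => ((ec n hn).2 (k - t) (by omega)).trans (ec n hn).1⟩⟩
  intro n s t hs ht hst
  exact hadj n (k - s) (k - t) (by omega) (by omega) (by unfold natAdj at hst ⊢; omega)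

lemma hfix_trans (H1 : ECHomotopicFix κ f g) (H2 : ECHomotopicFix κ g h) :
    ECHomotopicFix κ f h := by
  obtain ⟨k1, H1, ⟨a0, ak, aadj, aec⟩, e10, e1H, c1, e1c⟩ := H1
  obtain ⟨k2, H2, ⟨b0, bk, badj, bec⟩, e20, e2H, c2, e2c⟩ := H2
  refine ⟨k1 + k2, fun n t => if t ≤ k1 then H1 n t else H2 n (t - k1),
    ⟨fun n => by simp [a0], ?_, ?_, ?_⟩, e10.trans e20, ?_, max c1 c2, ?_⟩
  · intro n
    by_cases hk : k1 + k2 ≤ k1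
    · have hk2 : k2 = 0 := by omega
      have : H2 n 0 = H2 n k2 := by rw [hk2]
      simp only [if_pos hk]
      rw [show k1 + k2 = k1 by omega, ak, ← b0, this, bk]
    · simp only [if_neg hk]
      rw [show k1 + k2 - k1 = k2 by omega, bk]
  · intro n s t hs ht hst
    by_cases h1 : s ≤ k1 <;> by_cases h2 : t ≤ k1
    · simpa [h1, h2] using aadj n s t h1 h2 hst
    · have : s = k1 ∧ t = k1 + 1 := by unfold natAdj at hst; omega
      simp only [if_pos h1, if_neg h2]
      rw [this.1, this.2, ak, ← b0, show k1 + 1 - k1 = 1 by omega]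
      exact badj n 0 1 (by omega) (by omega) (Or.inl rfl)
    · have : t = k1 ∧ s = k1 + 1 := by unfold natAdj at hst; omega
      simp only [if_neg h1, if_pos h2]
      rw [this.1, this.2, ak, ← b0, show k1 + 1 - k1 = 1 by omega]
      exact badj n 1 0 (by omega) (by omega) (Or.inr rfl)
    · simp only [if_neg h1, if_neg h2]
      exact badj n (s - k1) (t - k1) (by omega) (by omega)
        (by unfold natAdj at hst ⊢; omega)
  · intro t ht
    by_cases h1 : t ≤ k1
    · simpa [h1] using aec t h1
    · simpa [h1] using bec (t - k1) (by omega)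
  · intro t ht
    by_cases h1 : t ≤ k1
    · simpa [h1] using e1H t h1
    · simp only [if_neg h1]
      exact (e2H (t - k1) (by omega)).trans e10.symm
  · intro n hn
    refine ⟨(e1c n (by omega)).1.trans (e2c n (by omega)).1, fun t ht => ?_⟩
    by_cases h1 : t ≤ k1
    · simpa [h1] using (e1c n (by omega)).2 t h1
    · simp only [if_neg h1]
      exact ((e2c n (by omega)).2 (t - k1) (by omega)).trans (e1c n (by omega)).1.symm

end Homotopy
section Congr
variable {X : Type*} {κ : X → X → Prop} {f g f' g' : ℕ → X}

lemma shift_isECPath (hg : IsECPath κ g) (t : ℕ) : IsECPath κ (fun m => g (m - t)) := by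
  refine ⟨fun a b hab => hg.1.close (by unfold natAdj at hab ⊢; omega), ecN g + t, fun n hn => ?_⟩
  have hs := ecN_spec hg.2
  show g (n - t) = g (ecN g + t - t)
  rw [hs (n - t) (by omega), hs (ecN g + t - t) (by omega)]

/-- Inserting a pause of length `M - ecN f` at the junction of `f * g`. -/
lemma hfix_pause (hf : IsECPath κ f) (hg : IsECPath κ g) (hfg : g 0 = f (ecN f))
    {M : ℕ} (hM : ecN f ≤ M) :
    ECHomotopicFix κ (ecStar f g) (fun n => if n ≤ M then f n else g (n - M)) := by
  have hfs := ecN_spec hf.2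
  have hgs := ecN_spec hg.2
  have hj : ∀ t : ℕ, (fun m => g (m - t)) 0 = f (ecN f) := fun t => by simpa using hfg
  refine ⟨M - ecN f, fun n t => ecStar f (fun m => g (m - t)) n, ⟨fun n => rfl, ?_, ?_, ?_⟩,
    ?_, ?_, M + ecN g + 1, ?_⟩
  · intro n
    beta_reduce
    by_cases h1 : n ≤ ecN f
    · rw [star_le h1, if_pos (by omega)]
    · rw [star_ge (hj _) (by omega)]
      by_cases h2 : n ≤ M
      · rw [if_pos h2, show n - ecN f - (M - ecN f) = 0 by omega, hfg, hfs n (by omega)]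
      · rw [if_neg h2]; congr 1; omega
  · intro n s t hs ht hst
    beta_reduce
    by_cases h1 : n ≤ ecN f
    · rw [star_le h1, star_le h1]
      exact Or.inl rfl
    · rw [star_ge (hj _) (by omega), star_ge (hj _) (by omega)]
      exact hg.1.close (by unfold natAdj at hst ⊢; omega)
  · intro t ht
    exact star_isECPath hf (shift_isECPath hg t) (hj t)
  · beta_reduce
    rw [star_le (Nat.zero_le _), if_pos (Nat.zero_le _)]
  · intro t ht
    beta_reduce
    rw [star_le (Nat.zero_le _), star_le (Nat.zero_le _)]
  · intro n hn
    beta_reduce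
    constructor
    · rw [star_ge hfg (by omega), if_neg (by omega), hgs (n - ecN f) (by omega),
        hgs (n - M) (by omega)]
    · intro t ht
      rw [star_ge (hj _) (by omega), star_ge hfg (by omega),
        hgs (n - ecN f - t) (by omega), hgs (n - ecN f) (by omega)]

lemma star_congr (hf : IsECPath κ f) (hg : IsECPath κ g) (hf' : IsECPath κ f')
    (hg' : IsECPath κ g') (hfg : g 0 = f (ecN f))
    (HF : ECHomotopicFix κ f f') (HG : ECHomotopicFix κ g g') :
    ECHomotopicFix κ (ecStar f g) (ecStar f' g') := by
  obtain ⟨kF, HF, ⟨a0, ak, aadj, aec⟩, e10, e1H, c1, e1c⟩ := HF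
  obtain ⟨kG, HG, ⟨b0, bk, badj, bec⟩, e20, e2H, c2, e2c⟩ := HG
  have hfs := ecN_spec hf.2
  have hf's := ecN_spec hf'.2
  have hgs := ecN_spec hg.2
  set M := max (max (ecN f) (ecN f')) c1 with hMdef
  have hMf : ecN f ≤ M := by omega
  have hMf' : ecN f' ≤ M := by omega
  have hMc : c1 ≤ M := by omega
  have hff' : f (ecN f) = f' (ecN f') := by
    rw [← hfs M hMf, ← hf's M hMf']
    exact (e1c M hMc).1
  have hfg' : g' 0 = f' (ecN f') := e20.symm.trans (hfg.trans hff')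
  refine hfix_trans (hfix_pause hf hg hfg hMf)
    (hfix_trans ?_ (hfix_symm (hfix_pause hf' hg' hfg' hMf')))
  refine ⟨max kF kG, fun n t => if n ≤ M then HF n (min t kF) else HG (n - M) (min t kG),
    ⟨?_, ?_, ?_, ?_⟩, ?_, ?_, M + max c2 (ecN g) + 1, ?_⟩
  · intro n
    by_cases h : n ≤ M <;> simp [h, Nat.zero_min, a0, b0]
  · intro n
    have e1 : min (max kF kG) kF = kF := by omega
    have e2 : min (max kF kG) kG = kG := by omega
    by_cases h : n ≤ M <;> simp [h, e1, e2, ak, bk]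
  · intro n s t hs ht hst
    by_cases hn : n ≤ M
    · simp only [if_pos hn]
      rcases (show min s kF = min t kF ∨ natAdj (min s kF) (min t kF) by
        unfold natAdj at hst ⊢; omega) with h | h
      · exact Or.inl (by rw [h])
      · exact aadj n _ _ (by omega) (by omega) h
    · simp only [if_neg hn]
      rcases (show min s kG = min t kG ∨ natAdj (min s kG) (min t kG) by
        unfold natAdj at hst ⊢; omega) with h | h
      · exact Or.inl (by rw [h])
      · exact badj (n - M) _ _ (by omega) (by omega) h
  · intro t ht
    constructor
    · intro a b hab
      beta_reduce
      have hFM : HF M (min t kF) = f (ecN f) :=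
        ((e1c M hMc).2 (min t kF) (by omega)).trans (hfs M hMf)
      have hG0 : HG 0 (min t kG) = f (ecN f) := (e2H (min t kG) (by omega)).trans hfg
      by_cases ha : a ≤ M <;> by_cases hb : b ≤ M
      · simp only [if_pos ha, if_pos hb]
        exact (aec (min t kF) (by omega)).1 a b hab
      · have ha' : a = M := by unfold natAdj at hab; omega
        have hb' : b = M + 1 := by unfold natAdj at hab; omega
        subst ha'; subst hb'
        rw [if_pos (le_refl M), if_neg (by omega : ¬ M + 1 ≤ M),
          show M + 1 - M = 1 by omega, hFM, ← hG0]
        exact (bec (min t kG) (by omega)).1 0 1 (Or.inl rfl)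
      · have hb' : b = M := by unfold natAdj at hab; omega
        have ha' : a = M + 1 := by unfold natAdj at hab; omega
        subst hb'; subst ha'
        rw [if_neg (by omega : ¬ M + 1 ≤ M), if_pos (le_refl M),
          show M + 1 - M = 1 by omega, hFM, ← hG0]
        exact (bec (min t kG) (by omega)).1 1 0 (Or.inr rfl)
      · simp only [if_neg ha, if_neg hb]
        exact (bec (min t kG) (by omega)).1 (a - M) (b - M) (by unfold natAdj at hab ⊢; omega)
    · refine ⟨M + max c2 (ecN g) + 1, fun n hn => ?_⟩
      beta_reduce
      rw [if_neg (show ¬ n ≤ M by omega), if_neg (show ¬ M + max c2 (ecN g) + 1 ≤ M by omega),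
        ((e2c (n - M) (by omega)).2 (min t kG) (by omega)),
        ((e2c (M + max c2 (ecN g) + 1 - M) (by omega)).2 (min t kG) (by omega)),
        hgs (n - M) (by omega), hgs (M + max c2 (ecN g) + 1 - M) (by omega)]
  · show (if (0:ℕ) ≤ M then f 0 else g (0 - M)) = (if (0:ℕ) ≤ M then f' 0 else g' (0 - M))
    rw [if_pos (Nat.zero_le M), if_pos (Nat.zero_le M)]
    exact e10
  · intro t ht
    beta_reduce
    rw [if_pos (Nat.zero_le M), if_pos (Nat.zero_le M), e1H (min t kF) (by omega)]
  · intro n hn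
    constructor
    · show (if n ≤ M then f n else g (n - M)) = (if n ≤ M then f' n else g' (n - M))
      rw [if_neg (show ¬ n ≤ M by omega), if_neg (show ¬ n ≤ M by omega)]
      exact (e2c (n - M) (by omega)).1
    · intro t ht
      beta_reduce
      rw [if_neg (show ¬ n ≤ M by omega), if_neg (show ¬ n ≤ M by omega)]
      exact (e2c (n - M) (by omega)).2 (min t kG) (by omega)

end Congr
section Paths
variable {X : Type*} {κ : X → X → Prop}

lemma rev_isCont {q : DPath X} (hq : q.IsCont κ) : q.rev.IsCont κ := by
  intro a b ha hb hab
  have ha' : a ≤ q.len := ha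
  have hb' : b ≤ q.len := hb
  show q.toFun (q.len - a) = q.toFun (q.len - b) ∨ κ (q.toFun (q.len - a)) (q.toFun (q.len - b))
  exact qstep q hq (by omega) (by omega) (by unfold natAdj at hab ⊢; omega)

lemma rev_rev_inf (q : DPath X) : q.rev.rev.inf = q.inf := by
  funext n
  show q.toFun (q.len - (q.len - min n q.len)) = q.toFun (min n q.len)
  congr 1; omega

lemma inf_isECPath {q : DPath X} (hq : q.IsCont κ) : IsECPath κ q.inf := by
  refine ⟨fun a b hab => qstep q hq (by omega) (by omega)
    (by unfold natAdj at hab ⊢; omega), q.len, fun n hn => ?_⟩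
  show q.toFun (min n q.len) = q.toFun (min q.len q.len)
  congr 1; omega

lemma inf_tail (q : DPath X) : ∀ n, q.len ≤ n → q.inf n = q.inf q.len := fun n hn => by
  show q.toFun (min n q.len) = q.toFun (min q.len q.len)
  congr 1; omega

lemma inf_ecN_le (q : DPath X) : ecN q.inf ≤ q.len := ecN_le (inf_tail q)

lemma inf_ecN_val (q : DPath X) : q.inf (ecN q.inf) = q.toFun q.len :=
  (ecN_eq_tail (inf_tail q)).trans (by show q.toFun (min q.len q.len) = _; congr 1; omega)

lemma rev_inf_ecN_val (q : DPath X) : q.rev.inf (ecN q.rev.inf) = q.toFun 0 :=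
  (inf_ecN_val q.rev).trans (by show q.toFun (q.len - q.len) = _; congr 1; omega)

lemma inf_zero (q : DPath X) : q.inf 0 = q.toFun 0 := by
  show q.toFun (min 0 q.len) = _; congr 1

lemma rev_inf_zero (q : DPath X) : q.rev.inf 0 = q.toFun q.len := by
  show q.toFun (q.len - min 0 q.len) = _; congr 1

lemma inf_large (q : DPath X) {m : ℕ} (hm : q.len ≤ m) : q.inf m = q.toFun q.len := by
  show q.toFun (min m q.len) = _; congr 1; omega

/-- The loop `(q⁻¹)_∞ * q_∞` is nullhomotopic. -/
lemma null_qrevq (q : DPath X) (hq : q.IsCont κ) :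
    ECHomotopicFix κ (ecStar q.rev.inf q.inf) (fun _ => q.toFun q.len) := by
  set L := q.len with hL
  set A := q.rev.inf with hA
  set NA := ecN A with hNA
  have hAval : ∀ n, A n = q.toFun (L - min n L) := fun n => rfl
  have hAtail : ∀ n, L ≤ n → A n = A L := by
    intro n hn; rw [hAval, hAval]; congr 1; omega
  have hNAle : NA ≤ L := ecN_le hAtail
  have hAspec : ∀ n, NA ≤ n → A n = A NA := ecN_spec ⟨L, hAtail⟩
  have hANA : A NA = q.toFun 0 := by
    rw [ecN_eq_tail hAtail, hAval]; congr 1; omega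
  have plateau : ∀ s, s ≤ L - NA → q.toFun s = q.toFun 0 := by
    intro s hs
    have h1 : A (L - s) = A NA := hAspec (L - s) (by omega)
    rw [hAval, hANA] at h1
    rw [← h1]; congr 1; omega
  have hjun : q.inf 0 = A (ecN A) := by
    rw [← hNA, hANA]; show q.toFun (min 0 L) = q.toFun 0; congr 1
  have hBval : ∀ n, q.inf n = q.toFun (min n L) := fun n => rfl
  refine ⟨NA, fun n t => q.toFun (L - min (NA - t) (min n (L + NA - t - n))),
    ⟨?_, ?_, ?_, ?_⟩, ?_, ?_, L + NA, ?_⟩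
  · intro n
    beta_reduce
    by_cases h1 : n ≤ NA
    · rw [star_le (by rw [← hNA]; exact h1), hAval]
      congr 1; omega
    · rw [star_ge hjun (by omega), hBval]
      by_cases h2 : n ≤ L
      · rw [show L - min (NA - 0) (min n (L + NA - 0 - n)) = L - NA by omega,
          show min (n - ecN A) L = n - NA by omega,
          plateau (L - NA) (by omega), plateau (n - NA) (by omega)]
      · congr 1; omega
  · intro n
    beta_reduce
    congr 1; omega
  · intro n s t hs ht hst
    beta_reduce
    exact qstep q hq (by omega) (by omega) (by unfold natAdj at hst ⊢; omega)
  · intro t ht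
    refine ⟨fun a b hab => ?_, L + NA, fun n hn => ?_⟩
    · beta_reduce
      exact qstep q hq (by omega) (by omega) (by unfold natAdj at hab ⊢; omega)
    · beta_reduce
      congr 1; omega
  · rw [star_le (Nat.zero_le _), hAval]
    beta_reduce
    congr 1
  · intro t ht
    beta_reduce
    rw [star_le (Nat.zero_le _), hAval]
    congr 1; omega
  · intro n hn
    constructor
    · rw [star_ge hjun (by omega), hBval]
      beta_reduce
      congr 1; omega
    · intro t ht
      beta_reduce
      rw [star_ge hjun (by omega), hBval]
      congr 1; omega

end Paths
section Conj
variable {X : Type*} {κ : X → X → Prop}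

lemma null_qqrev (q : DPath X) (hq : q.IsCont κ) :
    ECHomotopicFix κ (ecStar q.inf q.rev.inf) (fun _ => q.toFun 0) := by
  have h := null_qrevq q.rev (rev_isCont hq)
  rw [rev_rev_inf q] at h
  have e : (fun _ : ℕ => q.rev.toFun q.rev.len) = (fun _ : ℕ => q.toFun 0) :=
    funext fun _ => by show q.toFun (q.len - q.len) = _; congr 1; omega
  rwa [e] at h

lemma conj_isLoop (q : DPath X) (hq : q.IsCont κ) {f : ℕ → X}
    (hf : IsECLoop κ (q.toFun 0) f) : IsECLoop κ (q.toFun q.len) (ecConj q f) := by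
  have hA : IsECPath κ q.rev.inf := inf_isECPath (rev_isCont hq)
  have hB : IsECPath κ q.inf := inf_isECPath hq
  have A_end := rev_inf_ecN_val q
  have A0 := rev_inf_zero q
  have B0 := inf_zero q
  have f_end : f (ecN f) = q.toFun 0 := loop_ecN_val hf
  have j1 : f 0 = q.rev.inf (ecN q.rev.inf) := hf.2.1.trans A_end.symm
  have hAf : IsECPath κ (ecStar q.rev.inf f) := star_isECPath hA hf.1 j1
  have NAf : ecN (ecStar q.rev.inf f) = ecN q.rev.inf + ecN f := star_ecN hA hf.1 j1
  have jB : q.inf 0 = ecStar q.rev.inf f (ecN (ecStar q.rev.inf f)) := by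
    rw [NAf, star_ge j1 (by omega),
      show ecN q.rev.inf + ecN f - ecN q.rev.inf = ecN f by omega, B0, f_end]
  refine ⟨star_isECPath hAf hB jB, ?_, ecN (ecStar q.rev.inf f) + q.len, fun n hn => ?_⟩
  · show ecStar (ecStar q.rev.inf f) q.inf 0 = q.toFun q.len
    rw [star_le (Nat.zero_le _), star_le (Nat.zero_le _), A0]
  · show ecStar (ecStar q.rev.inf f) q.inf n = q.toFun q.len
    rw [star_ge jB (by omega), inf_large q (by omega)]

lemma conj_congr (q : DPath X) (hq : q.IsCont κ) {f g : ℕ → X}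
    (hf : IsECLoop κ (q.toFun 0) f) (hg : IsECLoop κ (q.toFun 0) g)
    (H : ECHomotopicFix κ f g) : ECHomotopicFix κ (ecConj q f) (ecConj q g) := by
  have hA : IsECPath κ q.rev.inf := inf_isECPath (rev_isCont hq)
  have hB : IsECPath κ q.inf := inf_isECPath hq
  have A_end := rev_inf_ecN_val q
  have B0 := inf_zero q
  have f_end : f (ecN f) = q.toFun 0 := loop_ecN_val hf
  have g_end : g (ecN g) = q.toFun 0 := loop_ecN_val hg
  have j1f : f 0 = q.rev.inf (ecN q.rev.inf) := hf.2.1.trans A_end.symm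
  have j1g : g 0 = q.rev.inf (ecN q.rev.inf) := hg.2.1.trans A_end.symm
  have H1 : ECHomotopicFix κ (ecStar q.rev.inf f) (ecStar q.rev.inf g) :=
    star_congr hA hf.1 hA hg.1 j1f (hfix_refl hA) H
  have jBf : q.inf 0 = ecStar q.rev.inf f (ecN (ecStar q.rev.inf f)) := by
    rw [star_ecN hA hf.1 j1f, star_ge j1f (by omega),
      show ecN q.rev.inf + ecN f - ecN q.rev.inf = ecN f by omega, B0, f_end]
  exact star_congr (star_isECPath hA hf.1 j1f) hB (star_isECPath hA hg.1 j1g) hB jBf H1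
    (hfix_refl hB)

lemma conj_rev_conj (q : DPath X) (hq : q.IsCont κ) {f : ℕ → X}
    (hf : IsECLoop κ (q.toFun 0) f) : ECHomotopicFix κ (ecConj q.rev (ecConj q f)) f := by
  have hA : IsECPath κ q.rev.inf := inf_isECPath (rev_isCont hq)
  have hB : IsECPath κ q.inf := inf_isECPath hq
  have A_end := rev_inf_ecN_val q
  have B_end := inf_ecN_val q
  have A0 := rev_inf_zero q
  have B0 := inf_zero q
  have hf1 := hf.1
  have f_end : f (ecN f) = q.toFun 0 := loop_ecN_val hf
  have j1 : f 0 = q.rev.inf (ecN q.rev.inf) := hf.2.1.trans A_end.symm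
  have j2 : q.inf 0 = f (ecN f) := B0.trans f_end.symm
  have j4 : q.rev.inf 0 = q.inf (ecN q.inf) := A0.trans B_end.symm
  have h_fB : IsECPath κ (ecStar f q.inf) := star_isECPath hf1 hB j2
  have h_BA : IsECPath κ (ecStar q.inf q.rev.inf) := star_isECPath hB hA j4
  have BA_end : ecStar q.inf q.rev.inf (ecN (ecStar q.inf q.rev.inf)) = q.toFun 0 := by
    rw [star_ecN hB hA j4, star_ge j4 (by omega),
      show ecN q.inf + ecN q.rev.inf - ecN q.inf = ecN q.rev.inf by omega, A_end]
  have E0 : ecConj q.rev (ecConj q f)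
      = ecStar (ecStar q.inf (ecStar (ecStar q.rev.inf f) q.inf)) q.rev.inf := by
    unfold ecConj
    rw [rev_rev_inf q]
  have G1 : ecStar (ecStar q.rev.inf f) q.inf = ecStar q.rev.inf (ecStar f q.inf) :=
    star_assoc hA hf1 hB j1 j2
  have j5 : ecStar f q.inf 0 = q.rev.inf (ecN q.rev.inf) := (star_le (Nat.zero_le _)).trans j1
  have G2 : ecStar q.inf (ecStar q.rev.inf (ecStar f q.inf))
      = ecStar (ecStar q.inf q.rev.inf) (ecStar f q.inf) :=
    (star_assoc hB hA h_fB j4 j5).symm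
  have j6 : ecStar f q.inf 0 = ecStar q.inf q.rev.inf (ecN (ecStar q.inf q.rev.inf)) := by
    rw [BA_end, star_le (Nat.zero_le _), hf.2.1]
  have j7 : q.rev.inf 0 = ecStar f q.inf (ecN (ecStar f q.inf)) := by
    rw [star_ecN hf1 hB j2, star_ge j2 (by omega),
      show ecN f + ecN q.inf - ecN f = ecN q.inf by omega, A0, B_end]
  have G3 : ecStar (ecStar (ecStar q.inf q.rev.inf) (ecStar f q.inf)) q.rev.inf
      = ecStar (ecStar q.inf q.rev.inf) (ecStar (ecStar f q.inf) q.rev.inf) :=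
    star_assoc h_BA h_fB hA j6 j7
  have G4 : ecStar (ecStar f q.inf) q.rev.inf = ecStar f (ecStar q.inf q.rev.inf) :=
    star_assoc hf1 hB hA j2 j4
  have Hnull := null_qqrev q hq
  have j8 : ecStar q.inf q.rev.inf 0 = f (ecN f) := by
    rw [star_le (Nat.zero_le _), B0, f_end]
  have K1 : ECHomotopicFix κ (ecStar f (ecStar q.inf q.rev.inf))
      (ecStar f (fun _ => q.toFun 0)) :=
    star_congr hf1 h_BA hf1 (const_isECPath _) j8 (hfix_refl hf1) Hnull
  rw [star_const hf1 f_end] at K1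
  have h_fBA : IsECPath κ (ecStar f (ecStar q.inf q.rev.inf)) := star_isECPath hf1 h_BA j8
  have j9 : ecStar f (ecStar q.inf q.rev.inf) 0
      = ecStar q.inf q.rev.inf (ecN (ecStar q.inf q.rev.inf)) := by
    rw [BA_end, star_le (Nat.zero_le _), hf.2.1]
  have K2 : ECHomotopicFix κ
      (ecStar (ecStar q.inf q.rev.inf) (ecStar f (ecStar q.inf q.rev.inf)))
      (ecStar (fun _ => q.toFun 0) f) :=
    star_congr h_BA h_fBA (const_isECPath _) hf1 j9 Hnull K1
  rw [const_star hf.2.1] at K2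
  rw [E0, G1, G2, G3, G4]
  exact K2

lemma conjOfStar (q : DPath X) (hq : q.IsCont κ) {f g : ℕ → X}
    (hf : IsECLoop κ (q.toFun 0) f) (hg : IsECLoop κ (q.toFun 0) g) :
    ECHomotopicFix κ (ecConj q (ecStar f g)) (ecStar (ecConj q f) (ecConj q g)) := by
  have hA : IsECPath κ q.rev.inf := inf_isECPath (rev_isCont hq)
  have hB : IsECPath κ q.inf := inf_isECPath hq
  have A_end := rev_inf_ecN_val q
  have B_end := inf_ecN_val q
  have A0 := rev_inf_zero q
  have B0 := inf_zero q
  have hf1 := hf.1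
  have hg1 := hg.1
  have f_end : f (ecN f) = q.toFun 0 := loop_ecN_val hf
  have g_end : g (ecN g) = q.toFun 0 := loop_ecN_val hg
  have j1f : f 0 = q.rev.inf (ecN q.rev.inf) := hf.2.1.trans A_end.symm
  have j1g : g 0 = q.rev.inf (ecN q.rev.inf) := hg.2.1.trans A_end.symm
  have j2f : q.inf 0 = f (ecN f) := B0.trans f_end.symm
  have j2g : q.inf 0 = g (ecN g) := B0.trans g_end.symm
  have j3 : g 0 = f (ecN f) := hg.2.1.trans f_end.symm
  have j4 : q.rev.inf 0 = q.inf (ecN q.inf) := A0.trans B_end.symm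
  have h_fg : IsECPath κ (ecStar f g) := star_isECPath hf1 hg1 j3
  have h_gB : IsECPath κ (ecStar g q.inf) := star_isECPath hg1 hB j2g
  have h_BA : IsECPath κ (ecStar q.inf q.rev.inf) := star_isECPath hB hA j4
  have BA_end : ecStar q.inf q.rev.inf (ecN (ecStar q.inf q.rev.inf)) = q.toFun 0 := by
    rw [star_ecN hB hA j4, star_ge j4 (by omega),
      show ecN q.inf + ecN q.rev.inf - ecN q.inf = ecN q.rev.inf by omega, A_end]
  have fg_end : ecStar f g (ecN (ecStar f g)) = q.toFun 0 := by
    rw [star_ecN hf1 hg1 j3, star_ge j3 (by omega),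
      show ecN f + ecN g - ecN f = ecN g by omega, g_end]
  have Af_end : ecStar q.rev.inf f (ecN (ecStar q.rev.inf f)) = q.toFun 0 := by
    rw [star_ecN hA hf1 j1f, star_ge j1f (by omega),
      show ecN q.rev.inf + ecN f - ecN q.rev.inf = ecN f by omega, f_end]
  have Ag_end : ecStar q.rev.inf g (ecN (ecStar q.rev.inf g)) = q.toFun 0 := by
    rw [star_ecN hA hg1 j1g, star_ge j1g (by omega),
      show ecN q.rev.inf + ecN g - ecN q.rev.inf = ecN g by omega, g_end]
  have jA_fg : ecStar f g 0 = q.rev.inf (ecN q.rev.inf) := (star_le (Nat.zero_le _)).trans j1f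
  have jB_fg : q.inf 0 = ecStar f g (ecN (ecStar f g)) := B0.trans fg_end.symm
  have E1 : ecStar (ecStar q.rev.inf (ecStar f g)) q.inf
      = ecStar q.rev.inf (ecStar (ecStar f g) q.inf) := star_assoc hA h_fg hB jA_fg jB_fg
  have E2 : ecStar (ecStar f g) q.inf = ecStar f (ecStar g q.inf) :=
    star_assoc hf1 hg1 hB j3 j2g
  have h_Af : IsECPath κ (ecStar q.rev.inf f) := star_isECPath hA hf1 j1f
  have h_Ag : IsECPath κ (ecStar q.rev.inf g) := star_isECPath hA hg1 j1g
  have jB_Af : q.inf 0 = ecStar q.rev.inf f (ecN (ecStar q.rev.inf f)) := B0.trans Af_end.symm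
  have jB_Ag : q.inf 0 = ecStar q.rev.inf g (ecN (ecStar q.rev.inf g)) := B0.trans Ag_end.symm
  have hT : IsECPath κ (ecStar (ecStar q.rev.inf g) q.inf) := star_isECPath h_Ag hB jB_Ag
  have jT : ecStar (ecStar q.rev.inf g) q.inf 0 = q.inf (ecN q.inf) :=
    ((star_le (Nat.zero_le _)).trans ((star_le (Nat.zero_le _)).trans A0)).trans B_end.symm
  have h_BT : IsECPath κ (ecStar q.inf (ecStar (ecStar q.rev.inf g) q.inf)) :=
    star_isECPath hB hT jT
  have F1 : ecStar (ecStar (ecStar q.rev.inf f) q.inf) (ecStar (ecStar q.rev.inf g) q.inf)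
      = ecStar (ecStar q.rev.inf f) (ecStar q.inf (ecStar (ecStar q.rev.inf g) q.inf)) :=
    star_assoc h_Af hB hT jB_Af jT
  have j_BT_f : ecStar q.inf (ecStar (ecStar q.rev.inf g) q.inf) 0 = f (ecN f) :=
    (star_le (Nat.zero_le _)).trans j2f
  have F2 : ecStar (ecStar q.rev.inf f) (ecStar q.inf (ecStar (ecStar q.rev.inf g) q.inf))
      = ecStar q.rev.inf (ecStar f (ecStar q.inf (ecStar (ecStar q.rev.inf g) q.inf))) :=
    star_assoc hA hf1 h_BT j1f j_BT_f
  have F3 : ecStar (ecStar q.rev.inf g) q.inf = ecStar q.rev.inf (ecStar g q.inf) :=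
    star_assoc hA hg1 hB j1g j2g
  have j_gB_A : ecStar g q.inf 0 = q.rev.inf (ecN q.rev.inf) :=
    (star_le (Nat.zero_le _)).trans j1g
  have F4 : ecStar q.inf (ecStar q.rev.inf (ecStar g q.inf))
      = ecStar (ecStar q.inf q.rev.inf) (ecStar g q.inf) :=
    (star_assoc hB hA h_gB j4 j_gB_A).symm
  have Hnull := null_qqrev q hq
  have j_gB0 : ecStar g q.inf 0 = ecStar q.inf q.rev.inf (ecN (ecStar q.inf q.rev.inf)) :=
    (star_le (Nat.zero_le _)).trans (hg.2.1.trans BA_end.symm)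
  have K1 : ECHomotopicFix κ (ecStar (ecStar q.inf q.rev.inf) (ecStar g q.inf))
      (ecStar (fun _ => q.toFun 0) (ecStar g q.inf)) :=
    star_congr h_BA h_gB (const_isECPath _) h_gB j_gB0 Hnull (hfix_refl h_gB)
  rw [const_star ((star_le (Nat.zero_le _)).trans hg.2.1)] at K1
  have M1 : ECHomotopicFix κ (ecStar q.inf (ecStar (ecStar q.rev.inf g) q.inf))
      (ecStar g q.inf) := by
    rw [(congrArg (ecStar q.inf) F3).trans F4]
    exact K1
  have M2 : ECHomotopicFix κ (ecStar f (ecStar q.inf (ecStar (ecStar q.rev.inf g) q.inf)))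
      (ecStar f (ecStar g q.inf)) :=
    star_congr hf1 h_BT hf1 h_gB j_BT_f (hfix_refl hf1) M1
  have j_fgB : ecStar g q.inf 0 = f (ecN f) := (star_le (Nat.zero_le _)).trans j3
  have M3 : ECHomotopicFix κ
      (ecStar q.rev.inf (ecStar f (ecStar q.inf (ecStar (ecStar q.rev.inf g) q.inf))))
      (ecStar q.rev.inf (ecStar f (ecStar g q.inf))) :=
    star_congr hA (star_isECPath hf1 h_BT j_BT_f) hA (star_isECPath hf1 h_gB j_fgB)
      ((star_le (Nat.zero_le _)).trans j1f) (hfix_refl hA) M2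
  have EL : ecConj q (ecStar f g) = ecStar q.rev.inf (ecStar f (ecStar g q.inf)) := by
    unfold ecConj
    rw [E1, E2]
  have ER : ecStar (ecConj q f) (ecConj q g)
      = ecStar q.rev.inf (ecStar f (ecStar q.inf (ecStar (ecStar q.rev.inf g) q.inf))) := by
    unfold ecConj
    rw [F1, F2]
  rw [EL, ER]
  exact hfix_symm M3

end Conj

/-- For a path `q` from `p` to `r` in `(X,κ)`, the induced map
`q₂ : Π₁(X,p) → Π₁(Y,r)` on the fundamental group realized by EC loops,
`q₂[f] = [(q⁻¹)_∞ * f * q_∞]`, is a group isomorphism: it sends `p`-based EC loops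
to `r`-based EC loops, is well defined, multiplicative, injective and surjective
on classes. -/
theorem basepoint_change_iso {X : Type*} (κ : X → X → Prop) (hκ : Symmetric κ)
    (p r : X) (q : DPath X) (hq : q.IsCont κ)
    (hq0 : q.toFun 0 = p) (hqm : q.toFun q.len = r) :
    (∀ f, IsECLoop κ p f → IsECLoop κ r (ecConj q f)) ∧
    (∀ f g, IsECLoop κ p f → IsECLoop κ p g →
       ECHomotopicFix κ f g → ECHomotopicFix κ (ecConj q f) (ecConj q g)) ∧
    (∀ f g, IsECLoop κ p f → IsECLoop κ p g →
       ECHomotopicFix κ (ecConj q (ecStar f g)) (ecStar (ecConj q f) (ecConj q g))) ∧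
    (∀ f g, IsECLoop κ p f → IsECLoop κ p g →
       ECHomotopicFix κ (ecConj q f) (ecConj q g) → ECHomotopicFix κ f g) ∧
    (∀ h, IsECLoop κ r h → ∃ f, IsECLoop κ p f ∧ ECHomotopicFix κ (ecConj q f) h) := by
  subst hq0; subst hqm
  have e0 : q.rev.toFun 0 = q.toFun q.len := by
    show q.toFun (q.len - 0) = _; congr 1 <;> omega
  have eL : q.rev.toFun q.rev.len = q.toFun 0 := by
    show q.toFun (q.len - q.len) = _; congr 1; omega
  refine ⟨fun f hf => conj_isLoop q hq hf, fun f g hf hg H => conj_congr q hq hf hg H,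
    fun f g hf hg => conjOfStar q hq hf hg, ?_, ?_⟩
  · intro f g hf hg H
    have hf' : IsECLoop κ (q.rev.toFun 0) (ecConj q f) := by
      rw [e0]; exact conj_isLoop q hq hf
    have hg' : IsECLoop κ (q.rev.toFun 0) (ecConj q g) := by
      rw [e0]; exact conj_isLoop q hq hg
    have h1 := conj_congr q.rev (rev_isCont hq) hf' hg' H
    exact hfix_trans (hfix_symm (conj_rev_conj q hq hf))
      (hfix_trans h1 (conj_rev_conj q hq hg))
  · intro h hh
    have hh' : IsECLoop κ (q.rev.toFun 0) h := by rw [e0]; exact hh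
    refine ⟨ecConj q.rev h, ?_, ?_⟩
    · have h1 := conj_isLoop q.rev (rev_isCont hq) hh'
      rwa [eL] at h1
    · have h2 := conj_rev_conj q.rev (rev_isCont hq) hh'
      have e3 : ecConj q.rev.rev (ecConj q.rev h) = ecConj q (ecConj q.rev h) := by
        unfold ecConj
        rw [rev_rev_inf q, rev_rev_inf q.rev]
      rwa [e3] at h2
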